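/- Let {u_t} be an L₄-decomposable Bernoulli shift with rate a > 2, let ρ ∈ ℝ with |ρ| < 1, let y₀ satisfy E|y₀|⁴ < ∞, and define y_t = ρ^t y₀ + Σ_{j=0}^{t−1} ρ^j u_{t−j} (the AR(1) recursion y_t = ρ y_{t−1} + u_t) and the stationary solution ȳ_t = Σ_{j=0}^∞ ρ^j u_{t−j}. Then there are finite constants c₁, c₂ such that |y_t − ȳ_t|₄ ≤ c₁ |ρ|^t for all t ≥ 1, and the coupled version ỹ_{t,ℓ} = Σ_{j=0}^∞ ρ^j ũ_{t−j,ℓ} (built from the coupled innovations ũ_{t−j,ℓ}) satisfies |ȳ_t − ỹ_{t,ℓ}|₄ ≤ c₂ ℓ^{−a}; in particular {ȳ_t} is an L₄-decomposable Bernoulli shift with rate a. -/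

import Mathlib

open MeasureTheory ProbabilityTheory Filter Matrix Topology Asymptotics
open scoped ProbabilityTheory

noncomputable section

namespace OnlineCPD

/-- Euclidean norm on `Fin d → ℝ`. -/
def euclNorm {d : ℕ} (v : Fin d → ℝ) : ℝ := Real.sqrt (∑ j, v j ^ 2)

/-- Frobenius norm of a real matrix. -/
def frobNorm {d : ℕ} (A : Matrix (Fin d) (Fin d) ℝ) : ℝ := Real.sqrt (∑ i, ∑ j, A i j ^ 2)

variable {Ω : Type*} [MeasureSpace Ω]

/-- The `L_ν` norm `(E |X|^ν)^{1/ν}` of a real random variable. -/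
def lnorm (X : Ω → ℝ) (ν : ℝ) : ℝ := (∫ ω, |X ω| ^ ν) ^ (1 / ν)

/-- Innovation data for a decomposable Bernoulli shift: an i.i.d. sequence `η` indexed by `ℤ`
together with i.i.d. copies `ηc s t ℓ` of `η 0`, the whole family being independent. -/
structure ShiftData (Ω : Type*) [MeasureSpace Ω] (S : Type*) [MeasurableSpace S] where
  η : ℤ → Ω → S
  ηc : ℤ → ℤ → ℕ → Ω → S
  meas_η : ∀ t, Measurable (η t)
  meas_ηc : ∀ s t ℓ, Measurable (ηc s t ℓ)
  ident : ∀ t, Measure.map (η t) ℙ = Measure.map (η 0) ℙ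
  ident_c : ∀ s t ℓ, Measure.map (ηc s t ℓ) ℙ = Measure.map (η 0) ℙ
  indep : iIndepFun
      (Sum.elim η fun p : ℤ × ℤ × ℕ => ηc p.1 p.2.1 p.2.2) ℙ

/-- The Bernoulli shift process `m_t = h(η_t, η_{t-1}, …)`. -/
def ShiftData.proc {S : Type*} [MeasurableSpace S] (D : ShiftData Ω S)
    (h : (ℕ → S) → ℝ) (t : ℤ) (ω : Ω) : ℝ :=
  h fun n => D.η (t - n) ω

/-- The coupled version `m̃_{t,ℓ} = h(η_t, …, η_{t-ℓ+1}, η̃_{t-ℓ,t,ℓ}, …)`, replacing the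
innovations at lags `≥ ℓ` with independent copies. -/
def ShiftData.coup {S : Type*} [MeasurableSpace S] (D : ShiftData Ω S)
    (h : (ℕ → S) → ℝ) (t : ℤ) (ℓ : ℕ) (ω : Ω) : ℝ :=
  h fun n => if n < ℓ then D.η (t - n) ω else D.ηc (t - n) t ℓ ω

/-- `X` is an `L_ν`-decomposable Bernoulli shift with rate `a`. -/
def IsBernoulliShift (X : ℤ → Ω → ℝ) (ν a : ℝ) : Prop :=
  ∃ (S : Type) (_ : MeasurableSpace S) (D : ShiftData Ω S) (h : (ℕ → S) → ℝ) (c₀ : ℝ),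
    Measurable h ∧ 0 < c₀ ∧
    (∀ t ω, X t ω = D.proc h t ω) ∧
    (∀ t, Integrable fun ω => |X t ω| ^ ν) ∧
    ∀ (t : ℤ) (ℓ : ℕ), 1 ≤ ℓ →
      (Integrable fun ω => |X t ω - D.coup h t ℓ ω| ^ ν) ∧
      lnorm (fun ω => X t ω - D.coup h t ℓ ω) ν ≤ c₀ * (ℓ : ℝ) ^ (-a)

/-- `X_m = O_P(b_m)`: for every `ε > 0` there is `M` with `sup_m P(|X_m| > M b_m) ≤ ε`. -/
def IsBigOP (X : ℕ → Ω → ℝ) (b : ℕ → ℝ) : Prop :=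
  ∀ ε : ℝ, 0 < ε → ∃ M : ℝ, ∀ m, (ℙ {ω | M * b m < |X m ω|}).toReal ≤ ε

/-- `X_m = o_P(1)`: convergence to zero in probability. -/
def IsoP (X : ℕ → Ω → ℝ) : Prop :=
  ∀ ε : ℝ, 0 < ε → Tendsto (fun m => (ℙ {ω | ε ≤ |X m ω|}).toReal) atTop (𝓝 0)

/-- A standard Wiener process: `W 0 = 0` a.s., independent Gaussian increments with the right
variances, and continuous paths. -/
structure IsStdWiener (W : ℝ → Ω → ℝ) : Prop where
  meas : ∀ t, Measurable (W t)
  zero : ∀ᵐ ω ∂(ℙ : Measure Ω), W 0 ω = 0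
  indep_incr : ∀ (n : ℕ) (t : Fin (n + 1) → ℝ), (∀ i, 0 ≤ t i) → Monotone t →
    iIndepFun
      (fun i : Fin n => fun ω => W (t i.succ) ω - W (t i.castSucc) ω) ℙ
  gauss_incr : ∀ s t : ℝ, 0 ≤ s → s ≤ t →
    Measure.map (fun ω => W t ω - W s ω) ℙ = gaussianReal 0 ((t - s).toNNReal)
  cont : ∀ᵐ ω ∂(ℙ : Measure Ω), Continuous fun t : ℝ => W t ω

/-- Convergence in distribution of real random variables (possibly defined on another
probability space), tested against bounded continuous functions. -/
def TendstoInDistrib {Ω' : Type*} [MeasureSpace Ω'] (X : ℕ → Ω → ℝ) (L : Ω' → ℝ) : Prop :=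
  ∀ f : ℝ → ℝ, Continuous f → (∃ M, ∀ x, |f x| ≤ M) →
    Tendsto (fun m => ∫ ω, f (X m ω)) atTop (𝓝 (∫ ω', f (L ω')))

/-- The training-sample least squares estimator. -/
def betaHat {d : ℕ} (x : ℤ → Ω → Fin d → ℝ) (y : ℤ → Ω → ℝ) (m : ℕ) (ω : Ω) :
    Fin d → ℝ :=
  (∑ t ∈ Finset.Icc (1 : ℤ) (m : ℤ), Matrix.vecMulVec (x t ω) (x t ω))⁻¹ *ᵥ
    ∑ t ∈ Finset.Icc (1 : ℤ) (m : ℤ), y t ω • x t ω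

/-- Monitoring residual at time `t`. -/
def resid {d : ℕ} (x : ℤ → Ω → Fin d → ℝ) (y : ℤ → Ω → ℝ) (m : ℕ) (t : ℤ) (ω : Ω) : ℝ :=
  y t ω - x t ω ⬝ᵥ betaHat x y m ω

/-- The CUSUM detector `Q(m;k) = Σ_{t=m+1}^{m+k} ε̂_t`. -/
def Qstat {d : ℕ} (x : ℤ → Ω → Fin d → ℝ) (y : ℤ → Ω → ℝ) (m k : ℕ) (ω : Ω) : ℝ :=
  ∑ t ∈ Finset.Icc ((m : ℤ) + 1) ((m : ℤ) + k), resid x y m t ω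

/-- The boundary function `g_η(m;k) = σ m^{1/2} (1 + k/m) (k/(m+k))^η`. -/
def gBound (σ η : ℝ) (m k : ℕ) : ℝ :=
  σ * (m : ℝ) ^ ((1 : ℝ) / 2) * (1 + (k : ℝ) / m) * ((k : ℝ) / (m + k)) ^ η

/-- The norming sequence `r_m = a_m / (a_m + m)`. -/
def rSeq (a : ℕ → ℕ) (m : ℕ) : ℝ := (a m : ℝ) / (a m + m)

/-- Assumption A1 (weak dependence of errors and regressors). -/
def AssumpA1 {d : ℕ} (x : ℤ → Ω → Fin d → ℝ) (ε : ℤ → Ω → ℝ) (aexp : ℝ) : Prop :=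
  2 < aexp ∧ IsBernoulliShift ε 4 aexp ∧ (∀ t, ∫ ω, ε t ω = 0) ∧
    (0 < ∫ ω, ε 0 ω ^ 2) ∧
    ∀ j : Fin d, (j : ℕ) ≠ 0 → IsBernoulliShift (fun t ω => x t ω j) 4 aexp

/-- Assumption A2 (exogeneity and non-degenerate second moments). -/
def AssumpA2 {d : ℕ} (x : ℤ → Ω → Fin d → ℝ) (ε : ℤ → Ω → ℝ)
    (C : Matrix (Fin d) (Fin d) ℝ) : Prop :=
  (∀ t, ∫ ω, ε t ω = 0) ∧
  (∀ (t : ℤ) (j : Fin d), (j : ℕ) ≠ 0 → ∫ ω, x t ω j * ε t ω = 0) ∧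
  (∀ (t : ℤ) (i j : Fin d), ∫ ω, x t ω i * x t ω j = C i j) ∧ C.PosDef

/-- The long-run variance `σ² = lim_m E (m^{-1/2} Σ_{t=1}^m ε_t)²`. -/
def IsLongRunVar (ε : ℤ → Ω → ℝ) (σ2 : ℝ) : Prop :=
  Tendsto (fun m : ℕ => ∫ ω, ((m : ℝ) ^ (-(1 : ℝ) / 2) * ∑ t ∈ Finset.Icc (1 : ℤ) (m : ℤ), ε t ω) ^ 2)
    atTop (𝓝 σ2)

/-- The trimming conditions: `a_m → ∞`, `a_m / min{m, T_m} → 0`, and `a_m ≤ T_m`. -/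
def Trimming (a T : ℕ → ℕ) : Prop :=
  Tendsto a atTop atTop ∧
  Tendsto (fun m => (a m : ℝ) / min (m : ℝ) (T m : ℝ)) atTop (𝓝 0) ∧
  ∀ m, a m ≤ T m

open Classical in
/-- First crossing time in `[lo, T]`, equal to `T` if no crossing occurs. -/
def stopTime (T : ℕ) (lo : ℕ) (cross : ℕ → Prop) : ℕ :=
  if (∃ k, lo ≤ k ∧ k ≤ T ∧ cross k) then sInf {k | lo ≤ k ∧ k ≤ T ∧ cross k} else T

/-- `sup_{1 ≤ u < ∞} |W(u)|/u^η`. -/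
def wienerSupTail {Ω' : Type*} [MeasureSpace Ω'] (W : ℝ → Ω' → ℝ) (η : ℝ) (ω : Ω') : ℝ :=
  ⨆ u : {u : ℝ // 1 ≤ u}, |W u ω| / (u : ℝ) ^ η


/-- Sample autocovariance of the residuals, `γ̂_j = m⁻¹ Σ_{t=j+1}^m ε̂_t ε̂_{t-j}`. -/
def gammaHat {d : ℕ} (x : ℤ → Ω → Fin d → ℝ) (y : ℤ → Ω → ℝ) (m j : ℕ) (ω : Ω) : ℝ :=
  (m : ℝ)⁻¹ * ∑ t ∈ Finset.Icc ((j : ℤ) + 1) (m : ℤ), resid x y m t ω * resid x y m (t - j) ω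

/-- The Bartlett long-run variance estimator with bandwidth `H`. -/
def sigmaHatSq {d : ℕ} (x : ℤ → Ω → Fin d → ℝ) (y : ℤ → Ω → ℝ) (H m : ℕ) (ω : Ω) : ℝ :=
  gammaHat x y m 0 ω + 2 * ∑ j ∈ Finset.Icc 1 H, (1 - (j : ℝ) / (H + 1)) * gammaHat x y m j ω

/-- Regressor vector of the dynamic model: exogenous regressors followed by `p` lags of `y`. -/
def xdyn {dz p : ℕ} (z : ℤ → Ω → Fin dz → ℝ) (y : ℤ → Ω → ℝ) (t : ℤ) (ω : Ω) :
    Fin (dz + p) → ℝ :=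
  Fin.append (z t ω) fun i : Fin p => y (t - 1 - (i : ℕ)) ω

end OnlineCPD

/-!
The stationary solution is the Bernoulli shift `ȳ_t = H(η_t, η_{t-1}, …)` with `H = arFilter ρ hu`,
and its coupled version is `∑ⱼ ρʲ ũⱼ`, where `ũⱼ` is a lag-`(ℓ - j)` coupled version of `u_{t-j}`
for `j < ℓ` and is built from copies only for `j ≥ ℓ`. Hence
`|ȳ_t - ỹ_{t,ℓ}|₄ ≤ ∑_{j<ℓ} |ρ|ʲ cu (ℓ - j)^{-a} + ∑_{j≥ℓ} |ρ|ʲ 2 |u₀|₄`, and `ℓ ≤ (j + 1)(ℓ - j)`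
bounds both sums by `ℓ^{-a} ∑ⱼ (j + 1)^a |ρ|ʲ`. All these series converge a.s. and in `L₄` because
their `L₄` norms are geometrically summable. Finally `y_t - ȳ_t = ρᵗ (y₀ - ȳ₀)`.
-/

namespace OnlineCPD

open scoped ENNReal

section Lp

variable {α E : Type*} {m : MeasurableSpace α} {μ : Measure α} {p : ℝ≥0∞}

theorem ae_summable_and_eLpNorm_tsum_le [NormedAddCommGroup E] [CompleteSpace E]
    (hp : 1 ≤ p) {g : ℕ → α → E} {B : ℕ → ℝ} (hg : ∀ j, AEStronglyMeasurable (g j) μ)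
    (hB : ∀ j, eLpNorm (g j) p μ ≤ ENNReal.ofReal (B j)) (hB0 : ∀ j, 0 ≤ B j)
    (hBs : Summable B) :
    (∀ᵐ x ∂μ, Summable fun j => g j x) ∧
      eLpNorm (fun x => ∑' j, g j x) p μ ≤ ENNReal.ofReal (∑' j, B j) := by
  have htsum : ∑' j, eLpNorm (g j) p μ ≤ ENNReal.ofReal (∑' j, B j) :=
    (ENNReal.tsum_le_tsum hB).trans (ENNReal.ofReal_tsum_of_nonneg hB0 hBs).ge
  have hsum : ∀ᵐ x ∂μ, Summable fun j => g j x :=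
    (summable_norm_of_tsum_eLpNorm_ne_top hp hg
      (ne_top_of_le_ne_top ENNReal.ofReal_ne_top htsum)).mono fun x hx => hx.of_norm
  refine ⟨hsum, le_trans ?_ htsum⟩
  calc eLpNorm (fun x => ∑' j, g j x) p μ
      ≤ atTop.liminf fun n => eLpNorm (∑ j ∈ Finset.range n, g j) p μ :=
        Lp.eLpNorm_lim_le_liminf_eLpNorm
          (fun n => Finset.aestronglyMeasurable_sum _ fun j _ => hg j) _ (hsum.mono fun x hx => by
            simpa only [Finset.sum_apply] using hx.hasSum.tendsto_sum_nat)
    _ ≤ ∑' j, eLpNorm (g j) p μ :=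
        liminf_le_of_frequently_le' (Frequently.of_forall fun n =>
          (eLpNorm_sum_le (fun j _ => hg j) hp).trans (ENNReal.sum_le_tsum _))

theorem eLpNorm_const_mul_le {f : α → ℝ} {B : ℝ} (c : ℝ)
    (hf : eLpNorm f p μ ≤ ENNReal.ofReal B) :
    eLpNorm (fun x => c * f x) p μ ≤ ENNReal.ofReal (|c| * B) := by
  rw [ENNReal.ofReal_mul (abs_nonneg c), ← Real.enorm_eq_ofReal_abs]
  exact (eLpNorm_const_smul c f p μ).trans_le (mul_le_mul_right hf _)

theorem ae_summable_and_eLpNorm_tsum_pow_mul_le (hp : 1 ≤ p) {ρ : ℝ}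
    {V : ℕ → α → ℝ} {B : ℕ → ℝ} (hV : ∀ j, AEStronglyMeasurable (V j) μ)
    (hB : ∀ j, eLpNorm (V j) p μ ≤ ENNReal.ofReal (B j)) (hB0 : ∀ j, 0 ≤ B j)
    (hBs : Summable fun j => |ρ| ^ j * B j) :
    (∀ᵐ x ∂μ, Summable fun j => ρ ^ j * V j x) ∧
      eLpNorm (fun x => ∑' j, ρ ^ j * V j x) p μ ≤ ENNReal.ofReal (∑' j, |ρ| ^ j * B j) :=
  ae_summable_and_eLpNorm_tsum_le hp (fun j => (hV j).const_mul _)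
    (fun j => by simpa only [abs_pow] using eLpNorm_const_mul_le (ρ ^ j) (hB j))
    (fun j => mul_nonneg (pow_nonneg (abs_nonneg ρ) j) (hB0 j)) hBs

end Lp

section LNorm

variable {Ω : Type*} [MeasureSpace Ω] {f g : Ω → ℝ} {ν : ℝ}

theorem lnorm_nonneg (f : Ω → ℝ) (ν : ℝ) : 0 ≤ lnorm f ν :=
  Real.rpow_nonneg (integral_nonneg fun _ => Real.rpow_nonneg (abs_nonneg _) _) _

theorem lnorm_congr_ae (h : f =ᵐ[ℙ] g) : lnorm f ν = lnorm g ν := by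
  unfold lnorm
  rw [integral_congr_ae (h.mono fun ω (hω : f ω = g ω) => show |f ω| ^ ν = |g ω| ^ ν by rw [hω])]

theorem lnorm_const_mul (hν : ν ≠ 0) (c : ℝ) : lnorm (fun ω => c * f ω) ν = |c| * lnorm f ν := by
  simp only [lnorm, abs_mul, Real.mul_rpow (abs_nonneg c) (abs_nonneg _), integral_const_mul]
  rw [Real.mul_rpow (Real.rpow_nonneg (abs_nonneg c) _)
    (integral_nonneg fun _ => Real.rpow_nonneg (abs_nonneg _) _), one_div,
    Real.rpow_rpow_inv (abs_nonneg c) hν]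

theorem integrable_abs_rpow_iff_memLp (hν : 0 < ν) (hf : AEStronglyMeasurable f ℙ) :
    Integrable (fun ω => |f ω| ^ ν) ↔ MemLp f (ENNReal.ofReal ν) ℙ := by
  simpa only [Real.norm_eq_abs, ENNReal.toReal_ofReal hν.le] using
    integrable_norm_rpow_iff hf (ENNReal.ofReal_pos.2 hν).ne' ENNReal.ofReal_ne_top

theorem lnorm_eq_toReal_eLpNorm (hν : 0 < ν) (hf : AEStronglyMeasurable f ℙ) :
    lnorm f ν = (eLpNorm f (ENNReal.ofReal ν) ℙ).toReal := by
  rw [lnorm, eLpNorm_eq_lintegral_rpow_enorm_toReal (ENNReal.ofReal_pos.2 hν).ne'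
    ENNReal.ofReal_ne_top, ENNReal.toReal_ofReal hν.le, ← ENNReal.toReal_rpow,
    integral_eq_lintegral_of_nonneg_ae (ae_of_all _ fun _ => Real.rpow_nonneg (abs_nonneg _) _)
      (hf.norm.aemeasurable.pow_const ν).aestronglyMeasurable]
  congr 3
  funext ω
  rw [← ENNReal.ofReal_rpow_of_nonneg (abs_nonneg _) hν.le, ← Real.norm_eq_abs, ofReal_norm]

theorem eLpNorm_le_of_lnorm_le (hν : 0 < ν) (hf : AEStronglyMeasurable f ℙ)
    (hint : Integrable fun ω => |f ω| ^ ν) {c : ℝ} (h : lnorm f ν ≤ c) :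
    eLpNorm f (ENNReal.ofReal ν) ℙ ≤ ENNReal.ofReal c := by
  rw [← ENNReal.ofReal_toReal ((integrable_abs_rpow_iff_memLp hν hf).1 hint).eLpNorm_ne_top,
    ← lnorm_eq_toReal_eLpNorm hν hf]
  exact ENNReal.ofReal_le_ofReal h

theorem integrable_abs_rpow_and_lnorm_le (hν : 0 < ν) (hf : AEStronglyMeasurable f ℙ) {c : ℝ}
    (hc : 0 ≤ c) (h : eLpNorm f (ENNReal.ofReal ν) ℙ ≤ ENNReal.ofReal c) :
    (Integrable fun ω => |f ω| ^ ν) ∧ lnorm f ν ≤ c :=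
  ⟨(integrable_abs_rpow_iff_memLp hν hf).2 ⟨hf, h.trans_lt ENNReal.ofReal_lt_top⟩,
    (lnorm_eq_toReal_eLpNorm hν hf).trans_le (ENNReal.toReal_le_of_le_ofReal hc h)⟩

end LNorm

section Weights

theorem summable_succ_rpow_mul_geometric (a : ℝ) {r : ℝ} (hr0 : 0 ≤ r) (hr1 : r < 1) :
    Summable fun n : ℕ => ((n : ℝ) + 1) ^ a * r ^ n := by
  set k := ⌈a⌉₊
  have hk : Summable fun n : ℕ => 2 ^ (k - 1) * ((n : ℝ) ^ k * r ^ n + r ^ n) :=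
    ((summable_pow_mul_geometric_of_norm_lt_one k (by rwa [Real.norm_of_nonneg hr0])).add
      (summable_geometric_of_lt_one hr0 hr1)).mul_left _
  refine hk.of_nonneg_of_le (fun n => by positivity) fun n => ?_
  have hn : (1 : ℝ) ≤ n + 1 := by linarith [n.cast_nonneg (α := ℝ)]
  calc ((n : ℝ) + 1) ^ a * r ^ n ≤ ((n : ℝ) + 1) ^ k * r ^ n := by
        gcongr
        exact_mod_cast Real.rpow_le_rpow_of_exponent_le hn (Nat.le_ceil a)
    _ ≤ 2 ^ (k - 1) * ((n : ℝ) ^ k + 1 ^ k) * r ^ n := by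
        gcongr
        exact add_pow_le n.cast_nonneg zero_le_one k
    _ = 2 ^ (k - 1) * ((n : ℝ) ^ k * r ^ n + r ^ n) := by ring

variable {a : ℝ} {j ℓ : ℕ}

-- From `ℓ ≤ (j + 1) (ℓ - j)`.
theorem rpow_neg_le_succ_rpow_mul (ha : 0 ≤ a) (hj : j < ℓ) :
    ((ℓ - j : ℕ) : ℝ) ^ (-a) ≤ ((j : ℝ) + 1) ^ a * (ℓ : ℝ) ^ (-a) := by
  have hℓj : (0 : ℝ) < (ℓ - j : ℕ) := by exact_mod_cast Nat.sub_pos_of_lt hj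
  have hℓ : (0 : ℝ) < ℓ := by exact_mod_cast j.zero_le.trans_lt hj
  rw [Real.rpow_neg hℓj.le, Real.rpow_neg hℓ.le, ← Real.inv_rpow hℓj.le, ← Real.inv_rpow hℓ.le,
    ← Real.mul_rpow (by positivity) (by positivity)]
  refine Real.rpow_le_rpow (by positivity) ?_ ha
  rw [← div_eq_mul_inv, inv_le_iff_one_le_mul₀' hℓj, ← mul_div_assoc, le_div_iff₀ hℓ, one_mul]
  have : (ℓ : ℝ) ≤ ((ℓ - j : ℕ) : ℝ) * (j + 1) := by
    have hj' : (j : ℝ) + 1 ≤ ℓ := by exact_mod_cast hj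
    rw [Nat.cast_sub hj.le]
    nlinarith [mul_nonneg j.cast_nonneg (sub_nonneg.2 hj')]
  linarith

theorem one_le_succ_rpow_mul (ha : 0 ≤ a) (hℓ : 1 ≤ ℓ) (hj : ℓ ≤ j) :
    1 ≤ ((j : ℝ) + 1) ^ a * (ℓ : ℝ) ^ (-a) := by
  have hℓ0 : (0 : ℝ) < ℓ := by exact_mod_cast hℓ
  rw [Real.rpow_neg hℓ0.le, ← Real.inv_rpow hℓ0.le, ← Real.mul_rpow (by positivity) (by positivity)]
  refine Real.one_le_rpow ?_ ha
  rw [← div_eq_mul_inv, one_le_div hℓ0]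
  have : (ℓ : ℝ) ≤ j := by exact_mod_cast hj
  linarith

end Weights

theorem tsum_pow_mul_eq_sum_add {ρ : ℝ} {x : ℤ → ℝ} (t : ℕ)
    (hx : Summable fun j : ℕ => ρ ^ j * x (t - j)) :
    ∑' j : ℕ, ρ ^ j * x (t - j) =
      ∑ j ∈ Finset.range t, ρ ^ j * x (t - j) + ρ ^ t * ∑' j : ℕ, ρ ^ j * x (-j) := by
  rw [← hx.sum_add_tsum_nat_add t, ← tsum_mul_left]
  congr 2
  funext j
  rw [pow_add, show (t : ℤ) - ((j + t : ℕ) : ℤ) = -j by push_cast; ring]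
  ring

section IdentDistrib

variable {Ω : Type*} [MeasureSpace Ω] {p : ℝ≥0∞} {Y : Ω → ℝ}

theorem eLpNorm_eq_ofReal_of_identDistrib {X : Ω → ℝ} (hXY : IdentDistrib X Y ℙ ℙ)
    (hY : MemLp Y p ℙ) : eLpNorm X p ℙ = ENNReal.ofReal (eLpNorm Y p ℙ).toReal := by
  rw [hXY.eLpNorm_eq, ENNReal.ofReal_toReal hY.eLpNorm_ne_top]

theorem ae_summable_and_eLpNorm_tsum_lt_top_of_identDistrib (hp : 1 ≤ p) {ρ : ℝ} (hρ : |ρ| < 1)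
    (hY : MemLp Y p ℙ) {V : ℕ → Ω → ℝ} (hV : ∀ j, IdentDistrib (V j) Y ℙ ℙ) :
    (∀ᵐ ω, Summable fun j => ρ ^ j * V j ω) ∧
      eLpNorm (fun ω => ∑' j, ρ ^ j * V j ω) p ℙ < ⊤ := by
  obtain ⟨hsum, hnorm⟩ := ae_summable_and_eLpNorm_tsum_pow_mul_le hp
    (fun j => (hV j).aemeasurable_fst.aestronglyMeasurable)
    (fun j => (eLpNorm_eq_ofReal_of_identDistrib (hV j) hY).le) (fun _ => ENNReal.toReal_nonneg)
    ((summable_geometric_of_lt_one (abs_nonneg ρ) hρ).mul_right _)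
  exact ⟨hsum, hnorm.trans_lt ENNReal.ofReal_lt_top⟩

end IdentDistrib

-- The stationary solution of `y_t = ρ y_{t-1} + u_t` driven by `u_t = h(η_t, η_{t-1}, …)` is the
-- Bernoulli shift with kernel `arFilter ρ h`.
def arFilter {S : Type*} (ρ : ℝ) (h : (ℕ → S) → ℝ) (v : ℕ → S) : ℝ :=
  ∑' j : ℕ, ρ ^ j * h fun n => v (n + j)

theorem measurable_arFilter {S : Type*} [MeasurableSpace S] {h : (ℕ → S) → ℝ}
    (hh : Measurable h) (ρ : ℝ) : Measurable (arFilter ρ h) :=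
  Measurable.tsum fun _ =>
    (hh.comp (measurable_pi_lambda _ fun _ => measurable_pi_apply _)).const_mul _

namespace ShiftData

variable {Ω S : Type*} [MeasureSpace Ω] [MeasurableSpace S] (D : ShiftData Ω S)

def innov : ℤ ⊕ ℤ × ℤ × ℕ → Ω → S :=
  Sum.elim D.η fun p : ℤ × ℤ × ℕ => D.ηc p.1 p.2.1 p.2.2

theorem measurable_innov : ∀ i, Measurable (D.innov i)
  | .inl t => D.meas_η t
  | .inr p => D.meas_ηc p.1 p.2.1 p.2.2

theorem map_innov : ∀ i, Measure.map (D.innov i) ℙ = Measure.map (D.η 0) ℙ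
  | .inl t => D.ident t
  | .inr p => D.ident_c p.1 p.2.1 p.2.2

-- Both sides have the product law `(law of η₀)^ι`.
theorem identDistrib_innov_comp {ι : Type*} {f g : ι → ℤ ⊕ ℤ × ℤ × ℕ}
    (hf : f.Injective) (hg : g.Injective) :
    IdentDistrib (fun ω i => D.innov (f i) ω) (fun ω i => D.innov (g i) ω) ℙ ℙ where
  aemeasurable_fst := (measurable_pi_lambda _ fun i => D.measurable_innov (f i)).aemeasurable
  aemeasurable_snd := (measurable_pi_lambda _ fun i => D.measurable_innov (g i)).aemeasurable
  map_eq := by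
    have hf' : iIndepFun (fun i => D.innov (f i)) ℙ := D.indep.precomp hf
    have hg' : iIndepFun (fun i => D.innov (g i)) ℙ := D.indep.precomp hg
    rw [hf'.map_fun_eq_infinitePi_map fun i => D.measurable_innov _,
      hg'.map_fun_eq_infinitePi_map fun i => D.measurable_innov _]
    simp only [map_innov]

-- The coupled version of `m_s` at lag `m` built from the batch of copies `D.ηc · t k`
-- (`D.coup h s m` uses the batch `(s, m)`). Each summand of the coupled AR(1) filter at `(t, ℓ)`
-- is of this form, with the batch `(t, ℓ)`.
def coupWith (h : (ℕ → S) → ℝ) (s : ℤ) (m : ℕ) (t : ℤ) (k : ℕ) (ω : Ω) : ℝ :=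
  h fun n => if n < m then D.η (s - n) ω else D.ηc (s - n) t k ω

variable {D} {h : (ℕ → S) → ℝ}

theorem measurable_proc (hh : Measurable h) (t : ℤ) : Measurable (D.proc h t) :=
  hh.comp (measurable_pi_lambda _ fun _ => D.meas_η _)

theorem measurable_coupWith (hh : Measurable h) (s : ℤ) (m : ℕ) (t : ℤ) (k : ℕ) :
    Measurable (D.coupWith h s m t k) := by
  refine hh.comp (measurable_pi_lambda _ fun n => ?_)
  split_ifs
  exacts [D.meas_η _, D.meas_ηc _ _ _]

theorem measurable_proc_sub_coup (hh : Measurable h) (t : ℤ) (ℓ : ℕ) :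
    Measurable fun ω => D.proc h t ω - D.coup h t ℓ ω :=
  (measurable_proc hh t).sub (measurable_coupWith hh t ℓ t ℓ)

theorem injective_of_time_eq_sub {f : ℕ → ℤ ⊕ ℤ × ℤ × ℕ} (s : ℤ)
    (hf : ∀ n, Sum.elim id Prod.fst (f n) = s - n) : f.Injective :=
  Function.Injective.of_comp (f := Sum.elim id Prod.fst) fun n n' hn => by
    simpa only [Function.comp_apply, hf, sub_right_inj, Nat.cast_inj] using hn

theorem injective_inl_sub (s : ℤ) :
    (fun n : ℕ => (Sum.inl (s - n) : ℤ ⊕ ℤ × ℤ × ℕ)).Injective :=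
  injective_of_time_eq_sub s fun _ => rfl

theorem identDistrib_proc (hh : Measurable h) (t : ℤ) :
    IdentDistrib (D.proc h t) (D.proc h 0) ℙ ℙ :=
  (D.identDistrib_innov_comp (injective_inl_sub t) (injective_inl_sub 0)).comp hh

theorem identDistrib_coupWith (hh : Measurable h) (s : ℤ) (m : ℕ) (t : ℤ) (k : ℕ) :
    IdentDistrib (D.coupWith h s m t k) (D.proc h 0) ℙ ℙ := by
  let f : ℕ → ℤ ⊕ ℤ × ℤ × ℕ := fun n => if n < m then .inl (s - n) else .inr (s - n, t, k)
  have hf : f.Injective := injective_of_time_eq_sub s fun n => by simp only [f]; split_ifs <;> rfl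
  have hcoup : D.coupWith h s m t k = h ∘ fun ω n => D.innov (f n) ω := by
    funext ω
    simp only [coupWith, Function.comp_apply, f]
    congr 1
    funext n
    split_ifs <;> rfl
  rw [hcoup]
  exact (D.identDistrib_innov_comp hf (injective_inl_sub 0)).comp hh

theorem identDistrib_proc_sub_coupWith (hh : Measurable h) (s : ℤ) (m : ℕ) (t : ℤ) (k : ℕ) :
    IdentDistrib (fun ω => D.proc h s ω - D.coupWith h s m t k ω)
      (fun ω => D.proc h s ω - D.coup h s m ω) ℙ ℙ := by
  let idx : ℤ × ℕ → ℕ ⊕ ℕ → ℤ ⊕ ℤ × ℤ × ℕ := fun b =>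
    Sum.elim (fun n => .inl (s - n)) fun n => .inr (s - n, b)
  have hidx : ∀ b, (idx b).Injective := fun b =>
    (injective_inl_sub s).sumElim (injective_of_time_eq_sub s fun _ => rfl)
      fun _ _ => Sum.inl_ne_inr
  let Ψ : (ℕ ⊕ ℕ → S) → ℝ := fun v =>
    h (fun n => v (.inl n)) - h fun n => if n < m then v (.inl n) else v (.inr n)
  have hΨ : Measurable Ψ := by
    refine (hh.comp (measurable_pi_lambda _ fun _ => measurable_pi_apply _)).sub
      (hh.comp (measurable_pi_lambda _ fun n => ?_))
    split_ifs
    exacts [measurable_pi_apply _, measurable_pi_apply _]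
  exact (D.identDistrib_innov_comp (hidx (t, k)) (hidx (s, m))).comp hΨ

theorem proc_arFilter (ρ : ℝ) (t : ℤ) (ω : Ω) :
    D.proc (arFilter ρ h) t ω = ∑' j : ℕ, ρ ^ j * D.proc h (t - j) ω := by
  simp only [proc, arFilter]
  congr! 5 with j n
  rw [show t - ((n + j : ℕ) : ℤ) = t - j - n by push_cast; ring]

theorem coup_arFilter (ρ : ℝ) (t : ℤ) (ℓ : ℕ) (ω : Ω) :
    D.coup (arFilter ρ h) t ℓ ω = ∑' j : ℕ, ρ ^ j * D.coupWith h (t - j) (ℓ - j) t ℓ ω := by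
  simp only [coup, coupWith, arFilter, Nat.lt_sub_iff_add_lt]
  congr! 5 with j n
  rw [show t - ((n + j : ℕ) : ℤ) = t - j - n by push_cast; ring]

variable {p : ℝ≥0∞} {ρ : ℝ}

theorem ae_summable_pow_mul_proc (hh : Measurable h) (hp : 1 ≤ p) (hu : MemLp (D.proc h 0) p ℙ)
    (hρ : |ρ| < 1) (t : ℤ) : ∀ᵐ ω, Summable fun j : ℕ => ρ ^ j * D.proc h (t - j) ω :=
  (ae_summable_and_eLpNorm_tsum_lt_top_of_identDistrib hp hρ hu
    fun _ => identDistrib_proc hh _).1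

theorem memLp_proc_arFilter (hh : Measurable h) (hp : 1 ≤ p) (hu : MemLp (D.proc h 0) p ℙ)
    (hρ : |ρ| < 1) (t : ℤ) : MemLp (D.proc (arFilter ρ h) t) p ℙ := by
  refine ⟨(measurable_proc (measurable_arFilter hh ρ) t).aestronglyMeasurable, ?_⟩
  simpa only [funext (proc_arFilter (D := D) ρ t)] using
    (ae_summable_and_eLpNorm_tsum_lt_top_of_identDistrib hp hρ hu
      fun _ => identDistrib_proc hh _).2

variable {c a : ℝ}

theorem eLpNorm_proc_sub_coupWith_le (hh : Measurable h) (hp : 1 ≤ p)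
    (hcoup : ∀ (s : ℤ) (m : ℕ), 1 ≤ m →
      eLpNorm (fun ω => D.proc h s ω - D.coup h s m ω) p ℙ ≤ ENNReal.ofReal (c * (m : ℝ) ^ (-a)))
    (hu : MemLp (D.proc h 0) p ℙ) (hc : 0 ≤ c) (ha : 0 ≤ a) (t : ℤ) {ℓ : ℕ} (hℓ : 1 ≤ ℓ)
    (j : ℕ) :
    eLpNorm (fun ω => D.proc h (t - j) ω - D.coupWith h (t - j) (ℓ - j) t ℓ ω) p ℙ ≤
      ENNReal.ofReal (max c (2 * (eLpNorm (D.proc h 0) p ℙ).toReal) *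
        (((j : ℝ) + 1) ^ a * (ℓ : ℝ) ^ (-a))) := by
  set K := (eLpNorm (D.proc h 0) p ℙ).toReal
  have hM : 0 ≤ max c (2 * K) := le_max_of_le_left hc
  rcases lt_or_ge j ℓ with hj | hj
  · rw [(identDistrib_proc_sub_coupWith hh _ _ _ _).eLpNorm_eq]
    refine (hcoup _ _ (by omega)).trans (ENNReal.ofReal_le_ofReal ?_)
    exact mul_le_mul (le_max_left _ _) (rpow_neg_le_succ_rpow_mul ha hj) (by positivity) hM
  · calc eLpNorm (D.proc h (t - j) - D.coupWith h (t - j) (ℓ - j) t ℓ) p ℙ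
        ≤ eLpNorm (D.proc h (t - j)) p ℙ + eLpNorm (D.coupWith h (t - j) (ℓ - j) t ℓ) p ℙ :=
          eLpNorm_sub_le (measurable_proc hh _).aestronglyMeasurable
            (measurable_coupWith hh _ _ _ _).aestronglyMeasurable hp
      _ = ENNReal.ofReal (2 * K) := by
          rw [eLpNorm_eq_ofReal_of_identDistrib (identDistrib_proc hh _) hu,
            eLpNorm_eq_ofReal_of_identDistrib (identDistrib_coupWith hh _ _ _ _) hu,
            ← ENNReal.ofReal_add ENNReal.toReal_nonneg ENNReal.toReal_nonneg, two_mul]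
      _ ≤ _ := ENNReal.ofReal_le_ofReal ((le_max_right _ _).trans
          (le_mul_of_one_le_right hM (one_le_succ_rpow_mul ha hℓ hj)))

theorem exists_eLpNorm_proc_sub_coup_arFilter_le (hh : Measurable h) (hp : 1 ≤ p)
    (hcoup : ∀ (s : ℤ) (m : ℕ), 1 ≤ m →
      eLpNorm (fun ω => D.proc h s ω - D.coup h s m ω) p ℙ ≤ ENNReal.ofReal (c * (m : ℝ) ^ (-a)))
    (hu : MemLp (D.proc h 0) p ℙ) (hρ : |ρ| < 1) (hc : 0 < c) (ha : 0 ≤ a) :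
    ∃ C, 0 < C ∧ ∀ (t : ℤ) (ℓ : ℕ), 1 ≤ ℓ →
      eLpNorm (fun ω => D.proc (arFilter ρ h) t ω - D.coup (arFilter ρ h) t ℓ ω) p ℙ ≤
        ENNReal.ofReal (C * (ℓ : ℝ) ^ (-a)) := by
  set M := max c (2 * (eLpNorm (D.proc h 0) p ℙ).toReal)
  have hM : 0 < M := lt_max_of_lt_left hc
  have hS := summable_succ_rpow_mul_geometric a (abs_nonneg ρ) hρ
  refine ⟨M * ∑' j : ℕ, ((j : ℝ) + 1) ^ a * |ρ| ^ j,
    mul_pos hM (hS.tsum_pos (fun _ => by positivity) 0 (by simp)), fun t ℓ hℓ => ?_⟩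
  have hdiff : (fun ω => D.proc (arFilter ρ h) t ω - D.coup (arFilter ρ h) t ℓ ω) =ᵐ[ℙ]
      fun ω => ∑' j : ℕ, ρ ^ j * (D.proc h (t - j) ω - D.coupWith h (t - j) (ℓ - j) t ℓ ω) := by
    filter_upwards [ae_summable_pow_mul_proc hh hp hu hρ t,
      (ae_summable_and_eLpNorm_tsum_lt_top_of_identDistrib hp hρ hu
        fun j => identDistrib_coupWith hh (t - j) (ℓ - j) t ℓ).1] with ω hproc hcoupω
    simp only [proc_arFilter, coup_arFilter, mul_sub, hproc.tsum_sub hcoupω]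
  rw [eLpNorm_congr_ae hdiff]
  refine (ae_summable_and_eLpNorm_tsum_pow_mul_le hp
    (fun j => ((measurable_proc hh _).sub (measurable_coupWith hh _ _ _ _)).aestronglyMeasurable)
    (eLpNorm_proc_sub_coupWith_le hh hp hcoup hu hc.le ha t hℓ) (fun j => by positivity)
    ((hS.mul_left (M * (ℓ : ℝ) ^ (-a))).congr fun j => by ring)).2.trans
    (ENNReal.ofReal_le_ofReal (le_of_eq ?_))
  rw [← tsum_mul_left, ← tsum_mul_right]
  exact tsum_congr fun j => by ring

end ShiftData

theorem ar1_bernoulli_shift_general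
    {Ω S : Type} [MeasureSpace Ω] [MeasurableSpace S]
    (D : ShiftData Ω S) (hu : (ℕ → S) → ℝ) (a cu ρ : ℝ) (y0 : Ω → ℝ)
    (hmeasu : Measurable hu) (ha : 2 < a) (hcu : 0 < cu) (hρ : |ρ| < 1)
    (hintu : ∀ t : ℤ, Integrable fun ω => |D.proc hu t ω| ^ (4 : ℝ))
    (hintu' : ∀ (t : ℤ) (ℓ : ℕ), 1 ≤ ℓ →
      Integrable fun ω => |D.proc hu t ω - D.coup hu t ℓ ω| ^ (4 : ℝ))
    (hcoupu : ∀ (t : ℤ) (ℓ : ℕ), 1 ≤ ℓ →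
      lnorm (fun ω => D.proc hu t ω - D.coup hu t ℓ ω) 4 ≤ cu * (ℓ : ℝ) ^ (-a))
    (y : ℕ → Ω → ℝ)
    (hy : ∀ (t : ℕ) (ω : Ω), y t ω = ρ ^ t * y0 ω +
      ∑ j ∈ Finset.range t, ρ ^ j * D.proc hu ((t : ℤ) - (j : ℤ)) ω)
    (ybar : ℤ → Ω → ℝ)
    (hybar : ∀ (t : ℤ) (ω : Ω), ybar t ω = ∑' j : ℕ, ρ ^ j * D.proc hu (t - (j : ℤ)) ω)
    (hy' : (ℕ → S) → ℝ)
    (hhy : ∀ s : ℕ → S, hy' s = ∑' j : ℕ, ρ ^ j * hu fun n => s (n + j)) :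
    (∃ c₁ : ℝ, 0 ≤ c₁ ∧ ∀ t : ℕ, 1 ≤ t →
      lnorm (fun ω => y t ω - ybar (t : ℤ) ω) 4 ≤ c₁ * |ρ| ^ t) ∧
    (∃ c₂ : ℝ, 0 ≤ c₂ ∧ ∀ (t : ℤ) (ℓ : ℕ), 1 ≤ ℓ →
      lnorm (fun ω => ybar t ω - D.coup hy' t ℓ ω) 4 ≤ c₂ * (ℓ : ℝ) ^ (-a)) ∧
    IsBernoulliShift ybar 4 a := by
  obtain rfl : hy' = arFilter ρ hu := funext hhy
  obtain rfl : ybar = D.proc (arFilter ρ hu) :=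
    funext₂ fun t ω => (hybar t ω).trans (D.proc_arFilter ρ t ω).symm
  have h4 : (0 : ℝ) < 4 := by norm_num
  have hp : 1 ≤ ENNReal.ofReal 4 := by norm_num
  have hu4 : MemLp (D.proc hu 0) (ENNReal.ofReal 4) ℙ :=
    (integrable_abs_rpow_iff_memLp h4
      (ShiftData.measurable_proc hmeasu 0).aestronglyMeasurable).1 (hintu 0)
  obtain ⟨C, hC, hcoup⟩ := ShiftData.exists_eLpNorm_proc_sub_coup_arFilter_le hmeasu hp
    (fun s m hm => eLpNorm_le_of_lnorm_le h4
      (ShiftData.measurable_proc_sub_coup hmeasu s m).aestronglyMeasurable (hintu' s m hm)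
      (hcoupu s m hm)) hu4 hρ hcu (by linarith)
  have hcoup' := fun t ℓ hℓ => integrable_abs_rpow_and_lnorm_le h4
    (ShiftData.measurable_proc_sub_coup (measurable_arFilter hmeasu ρ) t ℓ).aestronglyMeasurable
    (by positivity) (hcoup t ℓ hℓ)
  refine ⟨⟨lnorm (fun ω => y0 ω - D.proc (arFilter ρ hu) 0 ω) 4, lnorm_nonneg _ _, fun t _ => ?_⟩,
    ⟨C, hC.le, fun t ℓ hℓ => (hcoup' t ℓ hℓ).2⟩, S, _, D, arFilter ρ hu, C,
    measurable_arFilter hmeasu ρ, hC, fun _ _ => rfl, fun t => (integrable_abs_rpow_iff_memLp h4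
      (ShiftData.measurable_proc (measurable_arFilter hmeasu ρ) t).aestronglyMeasurable).2
        (ShiftData.memLp_proc_arFilter hmeasu hp hu4 hρ t), hcoup'⟩
  rw [mul_comm, ← abs_pow, ← lnorm_const_mul (by norm_num)]
  refine (lnorm_congr_ae ?_).le
  filter_upwards [ShiftData.ae_summable_pow_mul_proc hmeasu hp hu4 hρ t] with ω hω
  rw [hy, hybar, hybar, tsum_pow_mul_eq_sum_add (x := fun s => D.proc hu s ω) t hω]
  simp only [zero_sub]
  ring

/-- **Lemma (AR(1) processes driven by Bernoulli-shift innovations).**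
For the AR(1) recursion `y_t = ρ y_{t-1} + u_t` with `|ρ| < 1`, `E|y₀|⁴ < ∞` and innovations
`{u_t}` forming an `L₄`-decomposable Bernoulli shift with rate `a > 2`:
`|y_t - ȳ_t|₄ ≤ c₁ |ρ|^t`, the coupled version of the stationary solution satisfies
`|ȳ_t - ỹ_{t,ℓ}|₄ ≤ c₂ ℓ^{-a}`, and `{ȳ_t}` is an `L₄`-decomposable Bernoulli shift
with rate `a`. -/
theorem ar1_bernoulli_shift
    {Ω S : Type} [MeasureSpace Ω] [IsProbabilityMeasure (ℙ : Measure Ω)] [MeasurableSpace S]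
    (D : ShiftData Ω S) (hu : (ℕ → S) → ℝ) (a cu ρ : ℝ) (y0 : Ω → ℝ)
    (hmeasu : Measurable hu) (ha : 2 < a) (hcu : 0 < cu) (hρ : |ρ| < 1)
    (hy0meas : Measurable y0)
    (hy0 : Integrable fun ω => |y0 ω| ^ (4 : ℝ))
    (hintu : ∀ t : ℤ, Integrable fun ω => |D.proc hu t ω| ^ (4 : ℝ))
    (hintu' : ∀ (t : ℤ) (ℓ : ℕ), 1 ≤ ℓ →
      Integrable fun ω => |D.proc hu t ω - D.coup hu t ℓ ω| ^ (4 : ℝ))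
    (hcoupu : ∀ (t : ℤ) (ℓ : ℕ), 1 ≤ ℓ →
      lnorm (fun ω => D.proc hu t ω - D.coup hu t ℓ ω) 4 ≤ cu * (ℓ : ℝ) ^ (-a))
    (y : ℕ → Ω → ℝ)
    (hy : ∀ (t : ℕ) (ω : Ω), y t ω = ρ ^ t * y0 ω +
      ∑ j ∈ Finset.range t, ρ ^ j * D.proc hu ((t : ℤ) - (j : ℤ)) ω)
    (ybar : ℤ → Ω → ℝ)
    (hybar : ∀ (t : ℤ) (ω : Ω), ybar t ω = ∑' j : ℕ, ρ ^ j * D.proc hu (t - (j : ℤ)) ω)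
    (hy' : (ℕ → S) → ℝ)
    (hhy : ∀ s : ℕ → S, hy' s = ∑' j : ℕ, ρ ^ j * hu fun n => s (n + j)) :
    (∃ c₁ : ℝ, 0 ≤ c₁ ∧ ∀ t : ℕ, 1 ≤ t →
      lnorm (fun ω => y t ω - ybar (t : ℤ) ω) 4 ≤ c₁ * |ρ| ^ t) ∧
    (∃ c₂ : ℝ, 0 ≤ c₂ ∧ ∀ (t : ℤ) (ℓ : ℕ), 1 ≤ ℓ →
      lnorm (fun ω => ybar t ω - D.coup hy' t ℓ ω) 4 ≤ c₂ * (ℓ : ℝ) ^ (-a)) ∧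
    IsBernoulliShift ybar 4 a :=
  ar1_bernoulli_shift_general D hu a cu ρ y0 hmeasu ha hcu hρ hintu hintu' hcoupu y hy ybar hybar
    hy' hhy

end OnlineCPD
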